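/- For an integer h ≥ 2, ∫_{-1/2}^{1/2} ∫_{-1/2}^{1/2} E_h⁺(t1) E_h⁺(t2) E_h⁺(t1+t2) dt1 dt2 ≪ h, where E_h⁺(t) = 1/(1/h + ‖t‖). -/

import Mathlib

/-- `‖t‖`: the distance from `t` to the nearest integer. -/
noncomputable def nint (t : ℝ) : ℝ := |t - round t|

/-- `E_h⁺(t) = 1/(1/h + ‖t‖)`. -/
noncomputable def Ehp (h : ℕ) (t : ℝ) : ℝ := 1 / (1 / (h : ℝ) + nint t)

open MeasureTheory Real


lemma nint_nonneg (t : ℝ) : 0 ≤ nint t := abs_nonneg _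

lemma nint_periodic : Function.Periodic nint 1 := by
  intro t
  unfold nint
  rw [round_add_one]
  push_cast
  ring_nf

lemma measurable_nint : Measurable nint := by
  have h1 : Measurable fun t : ℝ => ((round t : ℤ) : ℝ) := by
    have : Measurable fun t : ℝ => (⌊t + 1/2⌋ : ℤ) :=
      Int.measurable_floor.comp (measurable_id.add measurable_const)
    have h2 : Measurable fun n : ℤ => (n : ℝ) := measurable_from_top
    simpa [round_eq, Function.comp_def] using h2.comp this
  exact (measurable_id.sub h1).abs

lemma nint_eq_abs {t : ℝ} (h1 : -(1:ℝ)/2 ≤ t) (h2 : t ≤ 1/2) : nint t = |t| := by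
  rcases lt_or_eq_of_le h2 with h2 | h2
  · have : round t = 0 := by
      rw [round_eq, Int.floor_eq_zero_iff]
      constructor <;> linarith
    simp [nint, this]
  · subst h2
    have : round ((1:ℝ)/2) = 1 := by
      rw [round_eq]
      norm_num
    rw [nint, this]
    norm_num

lemma key2 {a u v w : ℝ} (ha : 0 < a) (hu : 0 ≤ u) (hv : 0 ≤ v)
    (huw : u ≤ w) (hvw : v ≤ w) :
    (a+u)⁻¹ * (a+v)⁻¹ * (a+w)⁻¹ ≤
      ((a+u) * Real.sqrt (a+u))⁻¹ * ((a+v) * Real.sqrt (a+v))⁻¹ := by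
  have hau : 0 < a + u := by linarith
  have hav : 0 < a + v := by linarith
  have haw : 0 < a + w := by linarith
  have h1 : Real.sqrt (a+u) * Real.sqrt (a+v) ≤ a + w := by
    calc Real.sqrt (a+u) * Real.sqrt (a+v)
        ≤ Real.sqrt (a+w) * Real.sqrt (a+w) :=
          mul_le_mul (Real.sqrt_le_sqrt (by linarith)) (Real.sqrt_le_sqrt (by linarith))
            (Real.sqrt_nonneg _) (Real.sqrt_nonneg _)
      _ = a + w := Real.mul_self_sqrt haw.le
  have hsu : 0 < Real.sqrt (a+u) := Real.sqrt_pos.mpr hau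
  have hsv : 0 < Real.sqrt (a+v) := Real.sqrt_pos.mpr hav
  have h2 : (a+w)⁻¹ ≤ (Real.sqrt (a+u) * Real.sqrt (a+v))⁻¹ :=
    inv_anti₀ (by positivity) h1
  calc (a+u)⁻¹ * (a+v)⁻¹ * (a+w)⁻¹
      ≤ (a+u)⁻¹ * (a+v)⁻¹ * (Real.sqrt (a+u) * Real.sqrt (a+v))⁻¹ := by
        apply mul_le_mul_of_nonneg_left h2 (by positivity)
    _ = ((a+u) * Real.sqrt (a+u))⁻¹ * ((a+v) * Real.sqrt (a+v))⁻¹ := by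
        rw [mul_inv, mul_inv, mul_inv]; ring

lemma key {a x y z : ℝ} (ha : 0 < a) (hx : 0 ≤ x) (hy : 0 ≤ y) (hz : 0 ≤ z) :
    (a+x)⁻¹ * (a+y)⁻¹ * (a+z)⁻¹ ≤
      ((a+x) * Real.sqrt (a+x))⁻¹ * ((a+y) * Real.sqrt (a+y))⁻¹
      + ((a+x) * Real.sqrt (a+x))⁻¹ * ((a+z) * Real.sqrt (a+z))⁻¹
      + ((a+y) * Real.sqrt (a+y))⁻¹ * ((a+z) * Real.sqrt (a+z))⁻¹ := by
  have hxy : (0:ℝ) ≤ ((a+x) * Real.sqrt (a+x))⁻¹ * ((a+y) * Real.sqrt (a+y))⁻¹ := by positivity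
  have hxz : (0:ℝ) ≤ ((a+x) * Real.sqrt (a+x))⁻¹ * ((a+z) * Real.sqrt (a+z))⁻¹ := by positivity
  have hyz : (0:ℝ) ≤ ((a+y) * Real.sqrt (a+y))⁻¹ * ((a+z) * Real.sqrt (a+z))⁻¹ := by positivity
  rcases le_total x y with h | h
  · rcases le_total y z with h' | h'
    · have := key2 ha hx hy (le_trans h h') h'
      linarith
    · have h2 := key2 ha hx hz h h'
      have e : (a+x)⁻¹ * (a+y)⁻¹ * (a+z)⁻¹ = (a+x)⁻¹ * (a+z)⁻¹ * (a+y)⁻¹ := by ring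
      rw [e]; linarith
  · rcases le_total x z with h' | h'
    · have h2 := key2 ha hx hy h' (h.trans h')
      linarith
    · have h2 := key2 ha hy hz h h'
      have e : (a+x)⁻¹ * (a+y)⁻¹ * (a+z)⁻¹ = (a+y)⁻¹ * (a+z)⁻¹ * (a+x)⁻¹ := by ring
      rw [e]; linarith

lemma ftc_pos {a : ℝ} (ha : 0 < a) :
    (∫ t in (0:ℝ)..(1/2), ((a + t) * Real.sqrt (a + t))⁻¹)
      = 2 * (Real.sqrt a)⁻¹ - 2 * (Real.sqrt (a + 1/2))⁻¹ := by
  have huIcc : Set.uIcc (0:ℝ) (1/2) = Set.Icc 0 (1/2) := Set.uIcc_of_le (by norm_num)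
  have hderiv : ∀ t ∈ Set.uIcc (0:ℝ) (1/2),
      HasDerivAt (fun s => -2 * (Real.sqrt (a + s))⁻¹) ((a + t) * Real.sqrt (a + t))⁻¹ t := by
    intro t ht
    rw [huIcc, Set.mem_Icc] at ht
    have hat : 0 < a + t := by linarith [ht.1]
    have hst : 0 < Real.sqrt (a + t) := Real.sqrt_pos.mpr hat
    have h1 : HasDerivAt (fun s : ℝ => a + s) 1 t := by
      simpa using (hasDerivAt_id t).const_add a
    have h2 : HasDerivAt (fun s : ℝ => Real.sqrt (a + s)) (1 / (2 * Real.sqrt (a + t))) t := by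
      simpa [Function.comp_def] using (Real.hasDerivAt_sqrt hat.ne').comp t h1
    have h3 := (h2.inv hst.ne').const_mul (-2 : ℝ)
    refine h3.congr_deriv ?_
    rw [Real.sq_sqrt hat.le]
    field_simp
  have hcont : IntervalIntegrable (fun t => ((a + t) * Real.sqrt (a + t))⁻¹)
      MeasureTheory.volume 0 (1/2) := by
    apply ContinuousOn.intervalIntegrable
    apply ContinuousOn.inv₀
    · exact ((continuous_const.add continuous_id).mul
        (Real.continuous_sqrt.comp (continuous_const.add continuous_id))).continuousOn
    · intro t ht
      rw [huIcc, Set.mem_Icc] at ht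
      have hat : 0 < a + t := by linarith [ht.1]
      positivity
  rw [intervalIntegral.integral_eq_sub_of_hasDerivAt hderiv hcont]
  ring

lemma ftc_neg {a : ℝ} (ha : 0 < a) :
    (∫ t in (-(1:ℝ)/2)..(0:ℝ), ((a - t) * Real.sqrt (a - t))⁻¹)
      = 2 * (Real.sqrt a)⁻¹ - 2 * (Real.sqrt (a + 1/2))⁻¹ := by
  have huIcc : Set.uIcc (-(1:ℝ)/2) (0:ℝ) = Set.Icc (-(1:ℝ)/2) 0 := Set.uIcc_of_le (by norm_num)
  have hderiv : ∀ t ∈ Set.uIcc (-(1:ℝ)/2) (0:ℝ),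
      HasDerivAt (fun s => 2 * (Real.sqrt (a - s))⁻¹) ((a - t) * Real.sqrt (a - t))⁻¹ t := by
    intro t ht
    rw [huIcc, Set.mem_Icc] at ht
    have hat : 0 < a - t := by linarith [ht.2]
    have hst : 0 < Real.sqrt (a - t) := Real.sqrt_pos.mpr hat
    have h1 : HasDerivAt (fun s : ℝ => a - s) (-1) t := by
      exact (hasDerivAt_id t).const_sub a
    have h2 : HasDerivAt (fun s : ℝ => Real.sqrt (a - s)) (-1 / (2 * Real.sqrt (a - t))) t := by
      have := (Real.hasDerivAt_sqrt hat.ne').comp t h1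
      exact this.congr_deriv (by ring)
    have h3 := (h2.inv hst.ne').const_mul (2 : ℝ)
    refine h3.congr_deriv ?_
    rw [Real.sq_sqrt hat.le]
    field_simp
  have hcont : IntervalIntegrable (fun t => ((a - t) * Real.sqrt (a - t))⁻¹)
      MeasureTheory.volume (-(1:ℝ)/2) 0 := by
    apply ContinuousOn.intervalIntegrable
    apply ContinuousOn.inv₀
    · exact ((continuous_const.sub continuous_id).mul
        (Real.continuous_sqrt.comp (continuous_const.sub continuous_id))).continuousOn
    · intro t ht
      rw [huIcc, Set.mem_Icc] at ht
      have hat : 0 < a - t := by linarith [ht.2]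
      positivity
  rw [intervalIntegral.integral_eq_sub_of_hasDerivAt hderiv hcont]
  norm_num

lemma measurable_f {a : ℝ} :
    Measurable (fun t => ((a + nint t) * Real.sqrt (a + nint t))⁻¹) :=
  ((measurable_const.add measurable_nint).mul
    (Real.continuous_sqrt.measurable.comp (measurable_const.add measurable_nint))).inv

lemma f_bound {a : ℝ} (ha : 0 < a) (t : ℝ) :
    |((a + nint t) * Real.sqrt (a + nint t))⁻¹| ≤ (a * Real.sqrt a)⁻¹ := by
  have h0 : 0 ≤ nint t := nint_nonneg t
  have h1 : a * Real.sqrt a ≤ (a + nint t) * Real.sqrt (a + nint t) :=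
    mul_le_mul (by linarith) (Real.sqrt_le_sqrt (by linarith)) (Real.sqrt_nonneg _) (by linarith)
  rw [abs_of_nonneg (by positivity)]
  exact inv_anti₀ (by positivity) h1

lemma f_nonneg {a : ℝ} (ha : 0 < a) (t : ℝ) :
    0 ≤ ((a + nint t) * Real.sqrt (a + nint t))⁻¹ := by
  have h0 : 0 ≤ nint t := nint_nonneg t
  positivity

lemma f_ii {a : ℝ} (ha : 0 < a) (c d : ℝ) :
    IntervalIntegrable (fun t => ((a + nint t) * Real.sqrt (a + nint t))⁻¹)
      MeasureTheory.volume c d := by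
  rw [intervalIntegrable_iff]
  apply MeasureTheory.Integrable.mono'
    (g := fun _ => (a * Real.sqrt a)⁻¹)
    (MeasureTheory.integrableOn_const measure_Ioc_lt_top.ne)
    measurable_f.aestronglyMeasurable
  refine Filter.Eventually.of_forall fun t => ?_
  rw [Real.norm_eq_abs]
  exact f_bound ha t

lemma B_le {a : ℝ} (ha : 0 < a) :
    (∫ t in (-(1:ℝ)/2)..(1/2), ((a + nint t) * Real.sqrt (a + nint t))⁻¹)
      ≤ 4 * (Real.sqrt a)⁻¹ := by
  rw [← intervalIntegral.integral_add_adjacent_intervals (f_ii ha (-(1:ℝ)/2) 0) (f_ii ha 0 (1/2))]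
  have e1 : (∫ t in (-(1:ℝ)/2)..(0:ℝ), ((a + nint t) * Real.sqrt (a + nint t))⁻¹)
      = ∫ t in (-(1:ℝ)/2)..(0:ℝ), ((a - t) * Real.sqrt (a - t))⁻¹ := by
    apply intervalIntegral.integral_congr
    intro t ht
    rw [Set.uIcc_of_le (by norm_num : -(1:ℝ)/2 ≤ 0), Set.mem_Icc] at ht
    simp only []
    rw [nint_eq_abs ht.1 (by linarith [ht.2]), abs_of_nonpos ht.2]
    ring_nf
  have e2 : (∫ t in (0:ℝ)..(1/2), ((a + nint t) * Real.sqrt (a + nint t))⁻¹)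
      = ∫ t in (0:ℝ)..(1/2), ((a + t) * Real.sqrt (a + t))⁻¹ := by
    apply intervalIntegral.integral_congr
    intro t ht
    rw [Set.uIcc_of_le (by norm_num : (0:ℝ) ≤ 1/2), Set.mem_Icc] at ht
    simp only []
    rw [nint_eq_abs (by linarith [ht.1]) ht.2, abs_of_nonneg ht.1]
  rw [e1, e2, ftc_pos ha, ftc_neg ha]
  have : 0 < Real.sqrt (a + 1/2) := Real.sqrt_pos.mpr (by linarith)
  have h2 : 0 < (Real.sqrt (a + 1/2))⁻¹ := by positivity
  linarith

lemma shift_integral {a : ℝ} (c : ℝ) :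
    (∫ t in (-(1:ℝ)/2)..(1/2), ((a + nint (c + t)) * Real.sqrt (a + nint (c + t)))⁻¹)
      = ∫ t in (-(1:ℝ)/2)..(1/2), ((a + nint t) * Real.sqrt (a + nint t))⁻¹ := by
  have hper : Function.Periodic (fun t => ((a + nint t) * Real.sqrt (a + nint t))⁻¹) 1 :=
    fun t => by simp [nint_periodic t]
  rw [intervalIntegral.integral_comp_add_left
    (fun t => ((a + nint t) * Real.sqrt (a + nint t))⁻¹) c]
  rw [show c + (1:ℝ)/2 = (c + -(1:ℝ)/2) + 1 by ring]
  rw [hper.intervalIntegral_add_eq (c + -(1:ℝ)/2) (-(1:ℝ)/2)]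
  norm_num

theorem double_integral_Ehp_le :
    ∃ C > 0, ∀ h : ℕ, 2 ≤ h →
      (∫ t1 in (-(1:ℝ)/2)..(1/2), ∫ t2 in (-(1:ℝ)/2)..(1/2),
          Ehp h t1 * Ehp h t2 * Ehp h (t1 + t2)) ≤ C * h := by
  refine ⟨48, by norm_num, ?_⟩
  intro h hh
  have hh0 : (0:ℝ) < h := by exact_mod_cast Nat.lt_of_lt_of_le Nat.zero_lt_two hh
  set a : ℝ := (h : ℝ)⁻¹ with ha_def
  have ha : 0 < a := inv_pos.mpr hh0
  set f : ℝ → ℝ := fun t => ((a + nint t) * Real.sqrt (a + nint t))⁻¹ with hf_def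
  set μ : Measure ℝ := volume.restrict (Set.Ioc (-(1:ℝ)/2) (1/2)) with hμ_def
  have hlu : (-(1:ℝ)/2) ≤ 1/2 := by norm_num
  haveI hfin : IsFiniteMeasure μ := ⟨by rw [Measure.restrict_apply_univ]; exact measure_Ioc_lt_top⟩
  -- basic facts
  have hE : ∀ t, Ehp h t = (a + nint t)⁻¹ := fun t => by
    rw [Ehp, one_div, one_div, ha_def]
  have mE : Measurable (Ehp h) := by
    unfold Ehp
    simp only [one_div]
    exact (measurable_const.add measurable_nint).inv
  have hE_nonneg : ∀ t, 0 ≤ Ehp h t := fun t => by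
    rw [hE]; exact inv_nonneg.mpr (by linarith [nint_nonneg t])
  have hE_le : ∀ t, Ehp h t ≤ (h:ℝ) := fun t => by
    rw [hE]
    calc (a + nint t)⁻¹ ≤ a⁻¹ := inv_anti₀ ha (by linarith [nint_nonneg t])
      _ = (h:ℝ) := by rw [ha_def, inv_inv]
  have hfm : Measurable f := measurable_f
  -- integrability helper
  have hint : ∀ (F : ℝ×ℝ → ℝ) (C : ℝ), Measurable F → (∀ z, |F z| ≤ C) →
      Integrable F (μ.prod μ) := by
    intro F C mF hC
    exact (integrable_const C).mono' mF.aestronglyMeasurable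
      (Filter.Eventually.of_forall (fun z => by rw [Real.norm_eq_abs]; exact hC z))
  have hM : (0:ℝ) ≤ (a * Real.sqrt a)⁻¹ := by positivity
  -- integrable functions
  have hPint : Integrable (fun z : ℝ×ℝ => Ehp h z.1 * Ehp h z.2 * Ehp h (z.1 + z.2)) (μ.prod μ) := by
    refine hint _ ((h:ℝ)*(h:ℝ)*(h:ℝ))
      (((mE.comp measurable_fst).mul (mE.comp measurable_snd)).mul
        (mE.comp (measurable_fst.add measurable_snd))) (fun z => ?_)
    rw [abs_of_nonneg (mul_nonneg (mul_nonneg (hE_nonneg _) (hE_nonneg _)) (hE_nonneg _))]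
    exact mul_le_mul (mul_le_mul (hE_le _) (hE_le _) (hE_nonneg _) hh0.le) (hE_le _)
      (hE_nonneg _) (by positivity)
  have hf_absle : ∀ t, |f t| ≤ (a * Real.sqrt a)⁻¹ := fun t => f_bound ha t
  have hf_le : ∀ t, f t ≤ (a * Real.sqrt a)⁻¹ := fun t => (abs_le.mp (hf_absle t)).2
  have hf_nonneg : ∀ t, 0 ≤ f t := fun t => f_nonneg ha t
  have hT2int : Integrable (fun z : ℝ×ℝ => f z.1 * f (z.1 + z.2)) (μ.prod μ) := by
    refine hint _ ((a * Real.sqrt a)⁻¹ * (a * Real.sqrt a)⁻¹)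
      ((hfm.comp measurable_fst).mul (hfm.comp (measurable_fst.add measurable_snd)))
      (fun z => ?_)
    rw [abs_mul]
    exact mul_le_mul (hf_absle _) (hf_absle _) (abs_nonneg _) hM
  have hT1int : Integrable (fun z : ℝ×ℝ => f z.1 * f z.2) (μ.prod μ) := by
    refine hint _ ((a * Real.sqrt a)⁻¹ * (a * Real.sqrt a)⁻¹)
      ((hfm.comp measurable_fst).mul (hfm.comp measurable_snd)) (fun z => ?_)
    rw [abs_mul]
    exact mul_le_mul (hf_absle _) (hf_absle _) (abs_nonneg _) hM
  have hT3int : Integrable (fun z : ℝ×ℝ => f z.2 * f (z.1 + z.2)) (μ.prod μ) := by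
    refine hint _ ((a * Real.sqrt a)⁻¹ * (a * Real.sqrt a)⁻¹)
      ((hfm.comp measurable_snd).mul (hfm.comp (measurable_fst.add measurable_snd)))
      (fun z => ?_)
    rw [abs_mul]
    exact mul_le_mul (hf_absle _) (hf_absle _) (abs_nonneg _) hM
  have hQint : Integrable (fun z : ℝ×ℝ =>
      f z.1 * f z.2 + f z.1 * f (z.1 + z.2) + f z.2 * f (z.1 + z.2)) (μ.prod μ) :=
    (hT1int.add hT2int).add hT3int
  -- pointwise bound
  have hPQ : ∀ z : ℝ×ℝ, Ehp h z.1 * Ehp h z.2 * Ehp h (z.1 + z.2) ≤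
      f z.1 * f z.2 + f z.1 * f (z.1 + z.2) + f z.2 * f (z.1 + z.2) := fun z => by
    rw [hE, hE, hE, hf_def]
    exact key ha (nint_nonneg _) (nint_nonneg _) (nint_nonneg _)
  -- B
  set B : ℝ := ∫ t, f t ∂μ with hB_def
  have hBint : (∫ t in (-(1:ℝ)/2)..(1/2), f t) = B := intervalIntegral.integral_of_le hlu
  have hB_nonneg : 0 ≤ B := integral_nonneg hf_nonneg
  have hB_le : B ≤ 4 * (Real.sqrt a)⁻¹ := by
    rw [← hBint]; exact B_le ha
  have hshift : ∀ c : ℝ, (∫ t, f (c + t) ∂μ) = B := fun c => by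
    rw [← hBint, ← intervalIntegral.integral_of_le hlu]
    exact shift_integral c
  have hf_int : Integrable f μ := by
    refine (integrable_const ((a * Real.sqrt a)⁻¹)).mono' hfm.aestronglyMeasurable
      (Filter.Eventually.of_forall (fun t => by rw [Real.norm_eq_abs]; exact hf_absle t))
  -- main computation
  rw [intervalIntegral.integral_of_le hlu]
  simp only [intervalIntegral.integral_of_le hlu]
  rw [show (48:ℝ) * h = 3 * ((4 * (Real.sqrt a)⁻¹) * (4 * (Real.sqrt a)⁻¹)) by
    rw [show (4 * (Real.sqrt a)⁻¹) * (4 * (Real.sqrt a)⁻¹)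
        = 16 * ((Real.sqrt a * Real.sqrt a)⁻¹) by rw [mul_inv]; ring]
    rw [Real.mul_self_sqrt ha.le, ha_def, inv_inv]
    ring]
  calc (∫ t1, ∫ t2, Ehp h t1 * Ehp h t2 * Ehp h (t1 + t2) ∂μ ∂μ)
      = ∫ z : ℝ×ℝ, Ehp h z.1 * Ehp h z.2 * Ehp h (z.1 + z.2) ∂(μ.prod μ) :=
        integral_integral hPint
    _ ≤ ∫ z : ℝ×ℝ, f z.1 * f z.2 + f z.1 * f (z.1 + z.2) + f z.2 * f (z.1 + z.2)
          ∂(μ.prod μ) := integral_mono hPint hQint hPQ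
    _ = (∫ z : ℝ×ℝ, f z.1 * f z.2 ∂(μ.prod μ))
          + (∫ z : ℝ×ℝ, f z.1 * f (z.1 + z.2) ∂(μ.prod μ))
          + (∫ z : ℝ×ℝ, f z.2 * f (z.1 + z.2) ∂(μ.prod μ)) := by
        have hT12int : Integrable (fun z : ℝ×ℝ => f z.1 * f z.2 + f z.1 * f (z.1 + z.2))
            (μ.prod μ) := hT1int.add hT2int
        rw [integral_add hT12int hT3int, integral_add hT1int hT2int]
    _ = B * B + B * B + B * B := by
        have e1 : (∫ z : ℝ×ℝ, f z.1 * f z.2 ∂(μ.prod μ)) = B * B := by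
          rw [integral_prod_mul f f]
        have e2 : (∫ z : ℝ×ℝ, f z.1 * f (z.1 + z.2) ∂(μ.prod μ)) = B * B := by
          have h2' : Integrable (Function.uncurry fun t1 t2 : ℝ => f t1 * f (t1 + t2))
              (μ.prod μ) := hT2int
          have heq : (∫ t1, ∫ t2, f t1 * f (t1 + t2) ∂μ ∂μ)
              = ∫ z : ℝ×ℝ, f z.1 * f (z.1 + z.2) ∂(μ.prod μ) := integral_integral h2'
          rw [← heq]
          have : ∀ t1 : ℝ, (∫ t2, f t1 * f (t1 + t2) ∂μ) = f t1 * B := fun t1 => by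
            rw [integral_const_mul, hshift t1]
          simp only [this]
          rw [integral_mul_const]
        have e3 : (∫ z : ℝ×ℝ, f z.2 * f (z.1 + z.2) ∂(μ.prod μ)) = B * B := by
          have hsw := integral_prod_swap (fun z : ℝ×ℝ => f z.2 * f (z.1 + z.2)) (μ := μ) (ν := μ)
          have : (fun z : ℝ×ℝ => f z.swap.2 * f (z.swap.1 + z.swap.2))
              = fun z : ℝ×ℝ => f z.1 * f (z.1 + z.2) := by
            funext z
            simp [Prod.swap, add_comm]
          rw [← hsw]
          simp only [Prod.snd_swap, Prod.fst_swap]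
          rw [show (fun z : ℝ×ℝ => f z.1 * f (z.2 + z.1))
              = fun z : ℝ×ℝ => f z.1 * f (z.1 + z.2) from funext fun z => by rw [add_comm z.2 z.1]]
          exact e2
        rw [e1, e2, e3]
    _ ≤ 3 * ((4 * (Real.sqrt a)⁻¹) * (4 * (Real.sqrt a)⁻¹)) := by
        have hc : B * B ≤ (4 * (Real.sqrt a)⁻¹) * (4 * (Real.sqrt a)⁻¹) :=
          mul_le_mul hB_le hB_le hB_nonneg (by positivity)
        linarith
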